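/- The subspace of strongly maximal elements of a continuous dcpo D with the relative Scott topology is regular: for every strongly maximal x and every Scott open U containing x, there exists a Scott closed set C and a Scott open W with x ∈ W ⊆ C and C ∩ StrongMax(D) ⊆ U ∩ StrongMax(D). -/

import Mathlib

open Classical

def IsDcpo (D : Type*) [PartialOrder D] : Prop :=
  ∀ S : Set D, S.Nonempty → DirectedOn (· ≤ ·) S → ∃ s, IsLUB S s

def WayBelow {D : Type*} [PartialOrder D] (x y : D) : Prop :=
  ∀ S : Set D, S.Nonempty → DirectedOn (· ≤ ·) S →
    ∀ s, IsLUB S s → y ≤ s → ∃ a ∈ S, x ≤ a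

def ScottOpen {D : Type*} [PartialOrder D] (U : Set D) : Prop :=
  IsUpperSet U ∧ ∀ S : Set D, S.Nonempty → DirectedOn (· ≤ ·) S →
    ∀ s, IsLUB S s → s ∈ U → ∃ a ∈ S, a ∈ U

def ScottClosed {D : Type*} [PartialOrder D] (C : Set D) : Prop :=
  IsLowerSet C ∧ ∀ S : Set D, S.Nonempty → DirectedOn (· ≤ ·) S →
    S ⊆ C → ∀ s, IsLUB S s → s ∈ C

def IsBasis {D : Type*} [PartialOrder D] (B : Set D) : Prop :=
  ∀ x : D, (B ∩ {y | WayBelow y x}).Nonempty ∧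
    DirectedOn (· ≤ ·) (B ∩ {y | WayBelow y x}) ∧
    IsLUB (B ∩ {y | WayBelow y x}) x

def DcpoContinuous (D : Type*) [PartialOrder D] : Prop :=
  ∀ x : D, ({y | WayBelow y x} : Set D).Nonempty ∧
    DirectedOn (· ≤ ·) ({y | WayBelow y x} : Set D) ∧
    IsLUB ({y | WayBelow y x} : Set D) x

def DcpoAlgebraic (D : Type*) [PartialOrder D] : Prop :=
  ∀ x : D, ({c | WayBelow c c ∧ c ≤ x} : Set D).Nonempty ∧
    DirectedOn (· ≤ ·) ({c | WayBelow c c ∧ c ≤ x} : Set D) ∧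
    IsLUB ({c | WayBelow c c ∧ c ≤ x} : Set D) x

def HausdorffSep {D : Type*} [PartialOrder D] (x y : D) : Prop :=
  ∃ U V : Set D, ScottOpen U ∧ ScottOpen V ∧ x ∈ U ∧ y ∈ V ∧ U ∩ V = ∅

def StronglyMaximal {D : Type*} [PartialOrder D] (x : D) : Prop :=
  ∀ u v : D, WayBelow u v → WayBelow u x ∨ HausdorffSep v x

def Sharp {D : Type*} [PartialOrder D] (x : D) : Prop :=
  ∀ y z : D, WayBelow y z → WayBelow y x ∨ ∃ U : Set D, ScottOpen U ∧ z ∈ U ∧ x ∉ U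

noncomputable def step {D E : Type*} [PartialOrder D] [PartialOrder E] [OrderBot E]
    (x : D) (y : E) : D → E :=
  fun d => if x ≤ d then y else ⊥

/-! Interpolate `u ≪ v ≪ x` with `u ∈ U`, and take `W = ↟v` and `C` the set of points that
cannot be separated from `v` by disjoint Scott open sets; `W` is Scott open because
way-below interpolates in a continuous dcpo. `C` is Scott closed since a separating
neighbourhood of a directed supremum already contains a member of the family, and `W ⊆ C` since
an open set containing `v` contains everything above it. Strong maximality of `z ∈ C`, applied to
`u ≪ v`, gives `u ≪ z`, so `z ∈ U`. -/

section WayBelow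

variable {D : Type*} [PartialOrder D] {u v w x : D}

theorem WayBelow.le (h : WayBelow u v) : u ≤ v := by
  obtain ⟨a, rfl, hua⟩ := h {v} (Set.singleton_nonempty v) (directedOn_singleton v) v
    isLUB_singleton le_rfl
  exact hua

theorem WayBelow.trans_le (h : WayBelow u v) (hvw : v ≤ w) : WayBelow u w :=
  fun S hS hdir s hlub hws => h S hS hdir s hlub (hvw.trans hws)

theorem LE.le.trans_wayBelow (huv : u ≤ v) (h : WayBelow v w) : WayBelow u w := by
  intro S hS hdir s hlub hws
  obtain ⟨a, ha, hva⟩ := h S hS hdir s hlub hws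
  exact ⟨a, ha, huv.trans hva⟩

theorem not_hausdorffSep_of_le (hvw : v ≤ w) : ¬ HausdorffSep v w := by
  rintro ⟨A, B, hA, -, hvA, hwB, hAB⟩
  exact (Set.eq_empty_iff_forall_notMem.1 hAB) w ⟨hA.1 hvw hvA, hwB⟩

theorem scottClosed_setOf_not_hausdorffSep (v : D) : ScottClosed {z | ¬ HausdorffSep v z} := by
  refine ⟨fun a b hab hb ⟨A, B, hA, hB, hvA, haB, hAB⟩ =>
    hb ⟨A, B, hA, hB, hvA, hB.1 hab haB, hAB⟩, ?_⟩
  rintro S hS hdir hSC s hlub ⟨A, B, hA, hB, hvA, hsB, hAB⟩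
  obtain ⟨a, haS, haB⟩ := hB.2 S hS hdir s hlub hsB
  exact hSC haS ⟨A, B, hA, hB, hvA, haB, hAB⟩

theorem StronglyMaximal.wayBelow_of_not_hausdorffSep (hx : StronglyMaximal x)
    (huv : WayBelow u v) (hvx : ¬ HausdorffSep v x) : WayBelow u x :=
  (hx u v huv).resolve_right hvx

end WayBelow

namespace DcpoContinuous

variable {D : Type*} [PartialOrder D] {u x : D}

theorem exists_wayBelow_mem (hc : DcpoContinuous D) {U : Set D} (hU : ScottOpen U)
    (hxU : x ∈ U) : ∃ u ∈ U, WayBelow u x := by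
  obtain ⟨hne, hdir, hlub⟩ := hc x
  obtain ⟨u, hux, huU⟩ := hU.2 _ hne hdir x hlub hxU
  exact ⟨u, huU, hux⟩

theorem isLUB_setOf_wayBelow_wayBelow (hc : DcpoContinuous D) (x : D) :
    IsLUB {d | ∃ w, WayBelow d w ∧ WayBelow w x} x := by
  constructor
  · rintro d ⟨w, hdw, hwx⟩
    exact hdw.le.trans hwx.le
  · exact fun b hb => (hc x).2.2.2 fun w hwx => (hc w).2.2.2 fun d hdw => hb ⟨w, hdw, hwx⟩

theorem directedOn_setOf_wayBelow_wayBelow (hc : DcpoContinuous D) (x : D) :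
    DirectedOn (· ≤ ·) {d | ∃ w, WayBelow d w ∧ WayBelow w x} := by
  rintro d₁ ⟨w₁, hd₁, hw₁⟩ d₂ ⟨w₂, hd₂, hw₂⟩
  obtain ⟨w, hwx, hw₁w, hw₂w⟩ := (hc x).2.1 w₁ hw₁ w₂ hw₂
  obtain ⟨d, hdw, hd₁d, hd₂d⟩ := (hc w).2.1 d₁ (hd₁.trans_le hw₁w) d₂ (hd₂.trans_le hw₂w)
  exact ⟨d, ⟨w, hdw, hwx⟩, hd₁d, hd₂d⟩

theorem exists_wayBelow_wayBelow (hc : DcpoContinuous D) (h : WayBelow u x) :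
    ∃ v, WayBelow u v ∧ WayBelow v x := by
  obtain ⟨w₀, hw₀⟩ := (hc x).1
  obtain ⟨d₀, hd₀⟩ := (hc w₀).1
  obtain ⟨d, ⟨w, hdw, hwx⟩, hud⟩ := h {d | ∃ w, WayBelow d w ∧ WayBelow w x} ⟨d₀, w₀, hd₀, hw₀⟩
    (hc.directedOn_setOf_wayBelow_wayBelow x) x (hc.isLUB_setOf_wayBelow_wayBelow x) le_rfl
  exact ⟨w, hud.trans_wayBelow hdw, hwx⟩

theorem scottOpen_setOf_wayBelow (hc : DcpoContinuous D) (v : D) :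
    ScottOpen {z | WayBelow v z} := by
  refine ⟨fun a b hab ha => ha.trans_le hab, fun S hS hdir s hlub hvs => ?_⟩
  obtain ⟨w, hvw, hws⟩ := hc.exists_wayBelow_wayBelow hvs
  obtain ⟨a, ha, hwa⟩ := hws S hS hdir s hlub le_rfl
  exact ⟨a, ha, hvw.trans_le hwa⟩

end DcpoContinuous

theorem stmt18_general {D : Type*} [PartialOrder D]
    (hc : DcpoContinuous D) (x : D)
    (U : Set D) (hU : ScottOpen U) (hxU : x ∈ U) :
    ∃ C W : Set D, ScottClosed C ∧ ScottOpen W ∧ x ∈ W ∧ W ⊆ C ∧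
      C ∩ {z : D | StronglyMaximal z} ⊆ U ∩ {z : D | StronglyMaximal z} := by
  obtain ⟨u, huU, hux⟩ := hc.exists_wayBelow_mem hU hxU
  obtain ⟨v, huv, hvx⟩ := hc.exists_wayBelow_wayBelow hux
  refine ⟨{z | ¬ HausdorffSep v z}, {z | WayBelow v z}, scottClosed_setOf_not_hausdorffSep v,
    hc.scottOpen_setOf_wayBelow v, hvx, fun z hvz => not_hausdorffSep_of_le hvz.le, ?_⟩
  rintro z ⟨hzC, hzM⟩
  exact ⟨hU.1 (hzM.wayBelow_of_not_hausdorffSep huv hzC).le huU, hzM⟩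

theorem stmt18 {D : Type*} [PartialOrder D] (hD : IsDcpo D)
    (hc : DcpoContinuous D) (x : D) (hx : StronglyMaximal x)
    (U : Set D) (hU : ScottOpen U) (hxU : x ∈ U) :
    ∃ C W : Set D, ScottClosed C ∧ ScottOpen W ∧ x ∈ W ∧ W ⊆ C ∧
      C ∩ {z : D | StronglyMaximal z} ⊆ U ∩ {z : D | StronglyMaximal z} :=
  stmt18_general hc x U hU hxU
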